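/- Let M ∈ R^{m×n} satisfy |Σ_{i,j} M_{ij} ε_i δ_j| ≤ 1 for all ε_i, δ_j ∈ {−1, +1}. Then for any d and any unit vectors x_1,...,x_m, y_1,...,y_n ∈ R^d, |Σ_{i,j} M_{ij} arcsin⟨x_i, y_j⟩| ≤ π/2. -/

import Mathlib

open Real MeasureTheory Set

noncomputable def sg (t : ℝ) : ℝ := if 0 ≤ t then 1 else -1

lemma sg_mem (t : ℝ) : sg t = 1 ∨ sg t = -1 := by unfold sg; split <;> simp
lemma sg_abs (t : ℝ) : |sg t| ≤ 1 := by rcases sg_mem t with h | h <;> simp [h]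
lemma measurable_sg : Measurable sg :=
  Measurable.ite (measurableSet_le measurable_const measurable_id) measurable_const measurable_const
lemma sg_of_nonneg {t : ℝ} (h : 0 ≤ t) : sg t = 1 := if_pos h
lemma sg_of_neg {t : ℝ} (h : t < 0) : sg t = -1 := if_neg (not_le.2 h)
lemma sg_neg_of_ne {t : ℝ} (h : t ≠ 0) : sg (-t) = - sg t := by
  rcases h.lt_or_gt with h | h
  · rw [sg_of_neg h, sg_of_nonneg (by linarith : (0:ℝ) ≤ -t)]; ring
  · rw [sg_of_nonneg h.le, sg_of_neg (by linarith : -t < 0)]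

lemma bdd_II {f : ℝ → ℝ} (hf : Measurable f) (hb : ∀ t, |f t| ≤ 1) (a b : ℝ) :
    IntervalIntegrable f volume a b := by
  refine (intervalIntegrable_const (c := (1:ℝ))).mono_fun hf.aestronglyMeasurable ?_
  filter_upwards with t
  simpa using hb t

lemma null_cos (a : ℝ) : (volume : Measure ℝ) {θ | Real.cos (θ - a) = 0} = 0 := by
  have hsub : {θ : ℝ | Real.cos (θ - a) = 0} ⊆
      Set.range (fun n : ℤ => (2 * (n:ℝ) + 1) * π / 2 + a) := by
    intro θ hθ
    rw [Set.mem_setOf_eq, Real.cos_eq_zero_iff] at hθ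
    obtain ⟨n, hn⟩ := hθ
    exact ⟨n, by linarith⟩
  exact measure_mono_null hsub ((Set.countable_range _).measure_zero _)

lemma theta_integral {A : ℝ} (hA0 : 0 ≤ A) (hAπ : A ≤ π) :
    ∫ θ in (-π)..π, sg (Real.cos θ) * sg (Real.cos (θ - A)) = 2 * π - 4 * A := by
  set h : ℝ → ℝ := fun θ => sg (Real.cos θ) * sg (Real.cos (θ - A)) with hh
  have hmeas : Measurable h :=
    (measurable_sg.comp Real.continuous_cos.measurable).mul
      (measurable_sg.comp (Real.continuous_cos.measurable.comp (measurable_id.sub measurable_const)))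
  have hbd : ∀ t, |h t| ≤ 1 := by
    intro t
    rw [hh, abs_mul]
    calc |sg (Real.cos t)| * |sg (Real.cos (t - A))| ≤ 1 * 1 :=
      mul_le_mul (sg_abs _) (sg_abs _) (abs_nonneg _) zero_le_one
    _ = 1 := by ring
  have hII : ∀ a b : ℝ, IntervalIntegrable h volume a b := bdd_II hmeas hbd
  have hπ : (0:ℝ) < π := Real.pi_pos
  -- null set where flips fail
  have hZ : (volume : Measure ℝ) ({θ | Real.cos (θ - 0) = 0} ∪ {θ | Real.cos (θ - A) = 0}) = 0 :=
    measure_union_null (null_cos 0) (null_cos A)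
  have hae : ∀ᵐ θ : ℝ, Real.cos θ ≠ 0 ∧ Real.cos (θ - A) ≠ 0 := by
    have := measure_eq_zero_iff_ae_notMem.mp hZ
    filter_upwards [this] with θ hθ
    simp only [Set.mem_union, Set.mem_setOf_eq, not_or, sub_zero] at hθ
    exact hθ
  -- periodicity: h (τ - π) = h τ  and h (τ + π) = h τ  a.e.
  have flip : ∀ θ : ℝ, Real.cos θ ≠ 0 → Real.cos (θ - A) ≠ 0 →
      h (θ - π) = h θ ∧ h (θ + π) = h θ := by
    intro θ h1 h2
    constructor
    · rw [hh]
      simp only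
      rw [Real.cos_sub_pi, show θ - π - A = (θ - A) - π by ring, Real.cos_sub_pi,
        sg_neg_of_ne h1, sg_neg_of_ne h2]
      ring
    · rw [hh]
      simp only
      rw [Real.cos_add_pi, show θ + π - A = (θ - A) + π by ring, Real.cos_add_pi,
        sg_neg_of_ne h1, sg_neg_of_ne h2]
      ring
  have seg1 : ∫ θ in (-π)..(-(π/2)), h θ = ∫ θ in (0:ℝ)..(π/2), h θ := by
    have := intervalIntegral.integral_comp_sub_right (a := (0:ℝ)) (b := π/2) (f := h) π
    rw [show (0:ℝ) - π = -π by ring, show π/2 - π = -(π/2) by ring] at this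
    rw [← this]
    apply intervalIntegral.integral_congr_ae
    filter_upwards [hae] with θ hθ _
    exact (flip θ hθ.1 hθ.2).1
  have seg3 : ∫ θ in (π/2)..π, h θ = ∫ θ in (-(π/2))..(0:ℝ), h θ := by
    have := intervalIntegral.integral_comp_add_right (a := -(π/2)) (b := (0:ℝ)) (f := h) π
    rw [show -(π/2) + π = π/2 by ring, show (0:ℝ) + π = π by ring] at this
    rw [← this]
    apply intervalIntegral.integral_congr_ae
    filter_upwards [hae] with θ hθ _
    exact (flip θ hθ.1 hθ.2).2
  have hsplit : ∫ θ in (-π)..π, h θ =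
      (∫ θ in (-π)..(-(π/2)), h θ) + (∫ θ in (-(π/2))..(π/2), h θ) + ∫ θ in (π/2)..π, h θ := by
    rw [intervalIntegral.integral_add_adjacent_intervals (hII _ _) (hII _ _),
      intervalIntegral.integral_add_adjacent_intervals (hII _ _) (hII _ _)]
  have hmidsplit : ∫ θ in (-(π/2))..(π/2), h θ =
      (∫ θ in (-(π/2))..(0:ℝ), h θ) + ∫ θ in (0:ℝ)..(π/2), h θ :=
    (intervalIntegral.integral_add_adjacent_intervals (hII _ _) (hII _ _)).symm
  -- middle integral value
  have hmid : ∫ θ in (-(π/2))..(π/2), h θ = π - 2 * A := by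
    have e1 : ∫ θ in (-(π/2))..(π/2), h θ = ∫ θ in (-(π/2))..(π/2), sg (Real.cos (θ - A)) := by
      apply intervalIntegral.integral_congr
      intro θ hθ
      rw [Set.uIcc_of_le (by linarith) ] at hθ
      rw [hh]
      simp only
      rw [sg_of_nonneg (Real.cos_nonneg_of_mem_Icc ⟨hθ.1, hθ.2⟩), one_mul]
    have hIIg : ∀ a b : ℝ, IntervalIntegrable (fun θ => sg (Real.cos (θ - A))) volume a b :=
      bdd_II (measurable_sg.comp (Real.continuous_cos.measurable.comp
        (measurable_id.sub measurable_const))) (fun t => sg_abs _)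
    rw [e1, ← intervalIntegral.integral_add_adjacent_intervals (b := A - π/2)
      (hIIg _ _) (hIIg _ _)]
    have p1 : ∫ θ in (-(π/2))..(A - π/2), sg (Real.cos (θ - A)) = -A := by
      have : ∫ θ in (-(π/2))..(A - π/2), sg (Real.cos (θ - A)) =
          ∫ θ in (-(π/2))..(A - π/2), (-1 : ℝ) := by
        apply intervalIntegral.integral_congr_ae
        filter_upwards [hae] with θ hθ hmem
        rw [Set.uIoc_of_le (by linarith)] at hmem
        have hcle : Real.cos (θ - A) ≤ 0 := by
          have : Real.cos (θ - A) = - Real.cos ((θ - A) + π) := by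
            rw [Real.cos_add_pi]; ring
          rw [this, neg_nonpos]
          apply Real.cos_nonneg_of_mem_Icc
          constructor <;> [linarith [hmem.1]; linarith [hmem.2]]
        exact sg_of_neg (lt_of_le_of_ne hcle hθ.2)
      rw [this, intervalIntegral.integral_const]
      simp
    have p2 : ∫ θ in (A - π/2)..(π/2), sg (Real.cos (θ - A)) = π - A := by
      have : ∫ θ in (A - π/2)..(π/2), sg (Real.cos (θ - A)) =
          ∫ θ in (A - π/2)..(π/2), (1 : ℝ) := by
        apply intervalIntegral.integral_congr
        intro θ hθ
        rw [Set.uIcc_of_le (by linarith)] at hθ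
        apply sg_of_nonneg
        apply Real.cos_nonneg_of_mem_Icc
        constructor <;> [linarith [hθ.1]; linarith [hθ.2]]
      rw [this, intervalIntegral.integral_const]
      simp
      ring
    rw [p1, p2]; ring
  rw [hsplit, seg1, seg3]
  linarith [hmid, hmidsplit]

lemma sg_mul_pos {r : ℝ} (t : ℝ) (hr : 0 < r) : sg (r * t) = sg t := by
  unfold sg
  rcases le_or_gt 0 t with h | h
  · rw [if_pos h, if_pos (mul_nonneg hr.le h)]
  · rw [if_neg (not_le.2 h), if_neg (not_le.2 (mul_neg_of_pos_of_neg hr h))]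


noncomputable def gφ (t : ℝ) : ℝ := (Real.sqrt (2 * π))⁻¹ * Real.exp (-t ^ 2 / 2)
lemma gφ_eq : gφ = ProbabilityTheory.gaussianPDFReal 0 1 := by
  ext t; simp [gφ, ProbabilityTheory.gaussianPDFReal, sq]
lemma gφ_nonneg (t : ℝ) : 0 ≤ gφ t := by
  rw [gφ_eq]; exact ProbabilityTheory.gaussianPDFReal_nonneg 0 1 t
lemma integrable_gφ : Integrable gφ := by
  rw [gφ_eq]; exact ProbabilityTheory.integrable_gaussianPDFReal 0 1
lemma integral_gφ : ∫ t, gφ t = 1 := by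
  rw [gφ_eq]; exact ProbabilityTheory.integral_gaussianPDFReal_eq_one 0 one_ne_zero
lemma measurable_gφ : Measurable gφ := by
  rw [gφ_eq]; exact ProbabilityTheory.measurable_gaussianPDFReal 0 1

lemma integrable_bdd_mul {α : Type*} [MeasurableSpace α] {μ : Measure α} {F ψ : α → ℝ}
    (hF : Measurable F) (hFb : ∀ x, |F x| ≤ 1) (hψ : Integrable ψ μ) :
    Integrable (fun x => F x * ψ x) μ := by
  refine hψ.norm.mono' (hF.aestronglyMeasurable.mul hψ.1) ?_
  filter_upwards with x
  rw [Real.norm_eq_abs, abs_mul, Real.norm_eq_abs]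
  calc |F x| * |ψ x| ≤ 1 * |ψ x| := by
        apply mul_le_mul_of_nonneg_right (hFb x) (abs_nonneg _)
  _ = |ψ x| := one_mul _

lemma prod_gφ_integrable (N : ℕ) :
    Integrable (fun u : Fin N → ℝ => ∏ j, gφ (u j)) :=
  Integrable.fin_nat_prod (fun _ => integrable_gφ)

lemma integral_prod_gφ (N : ℕ) : ∫ u : Fin N → ℝ, ∏ j, gφ (u j) = 1 := by
  rw [MeasureTheory.integral_fintype_prod_volume_eq_pow (ι := Fin N) gφ, integral_gφ, one_pow]

lemma peel1 (N : ℕ) (G : ℝ → ℝ) :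
    ∫ w : Fin (N + 1) → ℝ, G (w 0) * ∏ i, gφ (w i) = ∫ a : ℝ, G a * gφ a := by
  have P := (measurePreserving_piFinSuccAbove (fun _ : Fin (N + 1) => (volume : Measure ℝ)) 0).symm
  rw [volume_pi, ← P.integral_comp' (fun w => G (w 0) * ∏ i, gφ (w i))]
  have : ∀ p : ℝ × (Fin N → ℝ),
      (fun w : Fin (N+1) → ℝ => G (w 0) * ∏ i, gφ (w i))
        ((MeasurableEquiv.piFinSuccAbove (fun _ => ℝ) 0).symm p)
      = (G p.1 * gφ p.1) * ∏ j, gφ (p.2 j) := by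
    intro p
    simp only [MeasurableEquiv.piFinSuccAbove_symm_apply, Fin.insertNthEquiv,
      Equiv.coe_fn_mk, Fin.insertNth_zero, Fin.prod_univ_succ, Fin.cons_zero, Fin.cons_succ,
      Fin.zero_succAbove, Fin.cast_eq_self, Function.comp_def, cast_eq]
    ring
  simp_rw [this]
  rw [integral_prod_mul (f := fun a => G a * gφ a) (g := fun u : Fin N → ℝ => ∏ j, gφ (u j))]
  have h1 : ∫ (u : Fin N → ℝ), ∏ j, gφ (u j) ∂Measure.pi (fun _ => volume) = 1 := by
    rw [← volume_pi]; exact integral_prod_gφ N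
  rw [h1, mul_one]

lemma peel2 (N : ℕ) (G : ℝ → ℝ → ℝ) (hG : Measurable (Function.uncurry G))
    (hGb : ∀ a b, |G a b| ≤ 1) :
    ∫ w : Fin (N + 2) → ℝ, G (w 0) (w 1) * ∏ i, gφ (w i)
      = ∫ p : ℝ × ℝ, G p.1 p.2 * (gφ p.1 * gφ p.2) := by
  have P := (measurePreserving_piFinSuccAbove (fun _ : Fin (N + 2) => (volume : Measure ℝ)) 0).symm
  rw [volume_pi, ← P.integral_comp' (fun w => G (w 0) (w 1) * ∏ i, gφ (w i))]
  have hrw : ∀ p : ℝ × (Fin (N + 1) → ℝ),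
      (fun w : Fin (N + 2) → ℝ => G (w 0) (w 1) * ∏ i, gφ (w i))
        ((MeasurableEquiv.piFinSuccAbove (fun _ => ℝ) 0).symm p)
      = G p.1 (p.2 0) * (gφ p.1 * ∏ j, gφ (p.2 j)) := by
    intro p
    have h1 : (1 : Fin (N + 2)) = Fin.succ 0 := rfl
    simp only [MeasurableEquiv.piFinSuccAbove_symm_apply, Fin.insertNthEquiv,
      Equiv.coe_fn_mk, Fin.insertNth_zero, h1, Fin.prod_univ_succ, Fin.cons_zero, Fin.cons_succ,
      Fin.zero_succAbove, Fin.cast_eq_self, Function.comp_def, cast_eq]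
  simp_rw [hrw]
  have hmeas1 : Measurable fun p : ℝ × (Fin (N + 1) → ℝ) => G p.1 (p.2 0) :=
    hG.comp (measurable_fst.prodMk ((measurable_pi_apply 0).comp measurable_snd))
  have hψ1 : Integrable (fun p : ℝ × (Fin (N + 1) → ℝ) => gφ p.1 * ∏ j, gφ (p.2 j))
      (volume.prod (Measure.pi fun _ => volume)) := by
    have := Integrable.mul_prod (μ := (volume : Measure ℝ))
      (ν := (Measure.pi fun _ : Fin (N+1) => (volume : Measure ℝ)))
      (f := gφ) (g := fun u : Fin (N + 1) → ℝ => ∏ j, gφ (u j)) integrable_gφ ?_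
    · exact this
    · rw [← volume_pi]; exact prod_gφ_integrable (N + 1)
  have hInt1 : Integrable (fun p : ℝ × (Fin (N + 1) → ℝ) => G p.1 (p.2 0) *
      (gφ p.1 * ∏ j, gφ (p.2 j))) (volume.prod (Measure.pi fun _ => volume)) :=
    integrable_bdd_mul hmeas1 (fun p => hGb _ _) hψ1
  rw [MeasureTheory.integral_prod _ hInt1]
  have hmeas2 : Measurable fun p : ℝ × ℝ => G p.1 p.2 := hG
  have hψ2 : Integrable (fun p : ℝ × ℝ => gφ p.1 * gφ p.2) (volume.prod volume) :=
    Integrable.mul_prod integrable_gφ integrable_gφ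
  have hInt2 : Integrable (fun p : ℝ × ℝ => G p.1 p.2 * (gφ p.1 * gφ p.2))
      (volume.prod volume) := integrable_bdd_mul hmeas2 (fun p => hGb _ _) hψ2
  rw [Measure.volume_eq_prod, MeasureTheory.integral_prod _ hInt2]
  congr 1
  ext a
  have inner1 : ∫ u : Fin (N + 1) → ℝ, G a (u 0) * (gφ a * ∏ j, gφ (u j))
      ∂(Measure.pi fun _ => volume)
      = gφ a * ∫ u : Fin (N + 1) → ℝ, G a (u 0) * ∏ j, gφ (u j) := by
    rw [← volume_pi, ← integral_const_mul]
    congr 1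
    ext u
    ring
  rw [inner1, peel1 N (G a)]
  rw [← integral_const_mul]
  congr 1
  ext b
  ring

noncomputable def Kd (d : ℕ) (g : EuclideanSpace ℝ (Fin d)) : ℝ := ∏ i, gφ (g i)

lemma Kd_norm (d : ℕ) (g : EuclideanSpace ℝ (Fin d)) :
    Kd d g = (Real.sqrt (2 * π))⁻¹ ^ d * Real.exp (-‖g‖ ^ 2 / 2) := by
  have hn : ‖g‖ ^ 2 = ∑ i, g i ^ 2 := by
    rw [EuclideanSpace.norm_eq]
    rw [Real.sq_sqrt (by positivity)]
    congr 1
    ext i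
    rw [Real.norm_eq_abs, sq_abs]
  unfold Kd gφ
  rw [Finset.prod_mul_distrib, Finset.prod_const, ← Real.exp_sum]
  congr 2
  · simp
  rw [hn, ← Finset.sum_div, Finset.sum_neg_distrib]

-- basis extraction
lemma exists_basis (N : ℕ) (x y : EuclideanSpace ℝ (Fin (N + 2)))
    (hx : ‖x‖ = 1) (hy : ‖y‖ = 1) :
    ∃ b : OrthonormalBasis (Fin (N + 2)) ℝ (EuclideanSpace ℝ (Fin (N + 2))),
      b 0 = x ∧ y = (inner ℝ x y : ℝ) • x + Real.sqrt (1 - (inner ℝ x y : ℝ) ^ 2) • b 1 := by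
  set ρ : ℝ := inner ℝ x y with hρ
  set w : EuclideanSpace ℝ (Fin (N + 2)) := y - ρ • x with hw
  have hxx : (inner ℝ x x : ℝ) = 1 := by
    rw [real_inner_self_eq_norm_sq, hx]; norm_num
  have hxw : (inner ℝ x w : ℝ) = 0 := by
    rw [hw, inner_sub_right, real_inner_smul_right, hxx]
    ring
  have hw2 : ‖w‖ ^ 2 = 1 - ρ ^ 2 := by
    have := real_inner_self_eq_norm_sq w
    rw [hw] at this
    have hexp : (inner ℝ (y - ρ • x) (y - ρ • x) : ℝ) = 1 - ρ ^ 2 := by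
      have hyx : (inner ℝ y x : ℝ) = ρ := by rw [real_inner_comm]
      rw [inner_sub_left, inner_sub_right, inner_sub_right, real_inner_smul_left,
        real_inner_smul_left, real_inner_smul_right, real_inner_smul_right, hxx,
        real_inner_self_eq_norm_sq y, hy, hyx]
      ring
    rw [hexp] at this
    linarith
  have hc : Real.sqrt (1 - ρ ^ 2) = ‖w‖ := by
    rw [← hw2, Real.sqrt_sq (norm_nonneg _)]
  have hcard : Module.finrank ℝ (EuclideanSpace ℝ (Fin (N + 2))) = Fintype.card (Fin (N + 2)) := by
    simp
  by_cases hw0 : w = 0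
  · -- y = ρ • x, and sqrt(1-ρ²) = 0
    have hcz : Real.sqrt (1 - ρ ^ 2) = 0 := by rw [hc, hw0, norm_zero]
    have hyx : y = ρ • x := by
      have : y - ρ • x = 0 := hw0
      linear_combination (norm := module) this
    have hon : Orthonormal ℝ (Set.restrict {(0 : Fin (N+2))} (fun _ => x)) := by
      constructor
      · intro i; exact hx
      · intro i j hij
        exfalso
        apply hij
        have hi := i.2; have hj := j.2
        simp only [Set.mem_singleton_iff] at hi hj
        exact Subtype.ext (hi.trans hj.symm)
    obtain ⟨b, hb⟩ := hon.exists_orthonormalBasis_extension_of_card_eq hcard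
    refine ⟨b, hb 0 rfl, ?_⟩
    rw [hcz, zero_smul, add_zero, hyx]
  · -- general position
    have hwn : ‖w‖ ≠ 0 := fun h => hw0 (norm_eq_zero.mp h)
    set e2 : EuclideanSpace ℝ (Fin (N + 2)) := ‖w‖⁻¹ • w with he2
    set v : Fin (N + 2) → EuclideanSpace ℝ (Fin (N + 2)) := fun i => if i = 0 then x else e2
      with hv
    have hon : Orthonormal ℝ (Set.restrict {(0 : Fin (N+2)), 1} v) := by
      constructor
      · rintro ⟨i, hi⟩
        simp only [Set.restrict, Set.domRestrict_apply, hv]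
        split
        · simpa using hx
        · rw [he2, norm_smul, norm_inv, norm_norm]
          simp [inv_mul_cancel₀ hwn]
      · rintro ⟨i, hi⟩ ⟨j, hj⟩ hij
        have hne : i ≠ j := fun h => hij (Subtype.ext h)
        simp only [Set.mem_insert_iff, Set.mem_singleton_iff] at hi hj
        simp only [Set.restrict, Set.domRestrict_apply, hv]
        have hx2 : (inner ℝ x e2 : ℝ) = 0 := by
          rw [he2, real_inner_smul_right, hxw, mul_zero]
        rcases hi with rfl | rfl <;> rcases hj with rfl | rfl
        · exact absurd rfl hne
        · simp only [if_pos rfl, if_neg (one_ne_zero : (1 : Fin (N+2)) ≠ 0)]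
          exact hx2
        · simp only [if_pos rfl, if_neg (one_ne_zero : (1 : Fin (N+2)) ≠ 0)]
          rw [real_inner_comm]
          exact hx2
        · exact absurd rfl hne
    obtain ⟨b, hb⟩ := hon.exists_orthonormalBasis_extension_of_card_eq hcard
    have hb0 : b 0 = x := by
      have := hb 0 (by simp)
      simpa [hv] using this
    have hb1 : b 1 = e2 := by
      have := hb 1 (by simp)
      rw [hv] at this
      simpa [if_neg (one_ne_zero : (1 : Fin (N+2)) ≠ 0)] using this
    refine ⟨b, hb0, ?_⟩
    rw [hb1, hc, he2, smul_smul, mul_inv_cancel₀ hwn, one_smul, hw]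
    abel

lemma spatial (N : ℕ) (x y : EuclideanSpace ℝ (Fin (N + 2))) (hx : ‖x‖ = 1) (hy : ‖y‖ = 1) :
    ∫ g : EuclideanSpace ℝ (Fin (N + 2)),
        sg (inner ℝ x g : ℝ) * sg (inner ℝ y g : ℝ) * Kd (N + 2) g
      = ∫ p : ℝ × ℝ, sg p.1 * sg ((inner ℝ x y : ℝ) * p.1
          + Real.sqrt (1 - (inner ℝ x y : ℝ) ^ 2) * p.2) * (gφ p.1 * gφ p.2) := by
  obtain ⟨b, hb0, hby⟩ := exists_basis N x y hx hy
  set ρ : ℝ := inner ℝ x y with hρ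
  set c := Real.sqrt (1 - ρ ^ 2) with hc
  set G : ℝ → ℝ → ℝ := fun a b2 => sg a * sg (ρ * a + c * b2) with hG
  have hGmeas : Measurable (Function.uncurry G) := by
    apply Measurable.mul
    · exact measurable_sg.comp measurable_fst
    · exact measurable_sg.comp ((measurable_fst.const_mul ρ).add (measurable_snd.const_mul c))
  have hGbd : ∀ a b2, |G a b2| ≤ 1 := by
    intro a b2
    rw [hG]
    simp only
    rw [abs_mul]
    calc |sg a| * |sg (ρ * a + c * b2)| ≤ 1 * 1 :=
      mul_le_mul (sg_abs _) (sg_abs _) (abs_nonneg _) zero_le_one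
    _ = 1 := by ring
  have step1 : ∀ g : EuclideanSpace ℝ (Fin (N + 2)),
      sg (inner ℝ x g : ℝ) * sg (inner ℝ y g : ℝ) = G (b.repr g 0) (b.repr g 1) := by
    intro g
    have h0 : (inner ℝ x g : ℝ) = b.repr g 0 := by
      rw [OrthonormalBasis.repr_apply_apply, hb0]
    have h1 : (inner ℝ y g : ℝ) = ρ * b.repr g 0 + c * b.repr g 1 := by
      rw [hby, inner_add_left, real_inner_smul_left, real_inner_smul_left,
        OrthonormalBasis.repr_apply_apply, OrthonormalBasis.repr_apply_apply, hb0]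
    rw [h0, h1]
  simp_rw [step1]
  have hK : ∀ g : EuclideanSpace ℝ (Fin (N + 2)), Kd (N + 2) g = Kd (N + 2) (b.repr g) := by
    intro g
    rw [Kd_norm, Kd_norm, LinearIsometryEquiv.norm_map]
  have e1 : (fun g : EuclideanSpace ℝ (Fin (N + 2)) => G (b.repr g 0) (b.repr g 1) * Kd (N + 2) g)
      = fun g => (fun v : EuclideanSpace ℝ (Fin (N + 2)) => G (v 0) (v 1) * Kd (N + 2) v)
          (b.repr g) := by
    funext g
    simp only
    rw [hK g]
  have e2 : ∫ gg : EuclideanSpace ℝ (Fin (N + 2)),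
      (fun v : EuclideanSpace ℝ (Fin (N + 2)) => G (v 0) (v 1) * Kd (N + 2) v) (b.repr gg)
      = ∫ v : EuclideanSpace ℝ (Fin (N + 2)), G (v 0) (v 1) * Kd (N + 2) v :=
    (b.measurePreserving_repr).integral_comp b.repr.toHomeomorph.measurableEmbedding
      (fun v : EuclideanSpace ℝ (Fin (N + 2)) => G (v 0) (v 1) * Kd (N + 2) v)
  rw [e1, e2]
  have e3 : ∫ w : Fin (N + 2) → ℝ,
      (fun v : EuclideanSpace ℝ (Fin (N + 2)) => G (v 0) (v 1) * Kd (N + 2) v)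
        (((MeasurableEquiv.toLp 2 (Fin (N + 2) → ℝ)).symm).symm w)
      = ∫ v : EuclideanSpace ℝ (Fin (N + 2)), G (v 0) (v 1) * Kd (N + 2) v :=
    ((EuclideanSpace.volume_preserving_symm_measurableEquiv_toLp (Fin (N + 2))).symm
      ((MeasurableEquiv.toLp 2 (Fin (N + 2) → ℝ)).symm)).integral_comp'
      (fun v : EuclideanSpace ℝ (Fin (N + 2)) => G (v 0) (v 1) * Kd (N + 2) v)
  rw [← e3]
  have e4 : (fun w : Fin (N + 2) → ℝ =>
      (fun v : EuclideanSpace ℝ (Fin (N + 2)) => G (v 0) (v 1) * Kd (N + 2) v)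
        (((MeasurableEquiv.toLp 2 (Fin (N + 2) → ℝ)).symm).symm w))
      = fun w => G (w 0) (w 1) * ∏ i, gφ (w i) := by
    funext w
    rfl
  rw [e4]
  exact peel2 N G hGmeas hGbd

lemma radial : ∫ r in Ioi (0:ℝ), r * Real.exp (-r ^ 2 / 2) = 1 := by
  have hderiv : ∀ r ∈ Ioi (0:ℝ), HasDerivAt (fun t : ℝ => -Real.exp (-t ^ 2 / 2))
      (r * Real.exp (-r ^ 2 / 2)) r := by
    intro r _
    have h1 : HasDerivAt (fun t : ℝ => -t ^ 2 / 2) (-r) r := by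
      have h0 := (hasDerivAt_pow 2 r).neg.div_const 2
      have h0' : HasDerivAt (fun x : ℝ => -x ^ 2 / 2) (-r) r :=
        h0.congr_deriv (by push_cast; ring)
      exact h0'
    have := h1.exp.neg
    refine this.congr_deriv ?_
    ring
  have hcont : ContinuousWithinAt (fun t : ℝ => -Real.exp (-t ^ 2 / 2)) (Ici 0) 0 :=
    (Continuous.neg (Real.continuous_exp.comp (by continuity))).continuousWithinAt
  have htend : Filter.Tendsto (fun t : ℝ => -Real.exp (-t ^ 2 / 2)) Filter.atTop (nhds 0) := by
    rw [show (0:ℝ) = -0 by ring]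
    apply Filter.Tendsto.neg
    apply Real.tendsto_exp_atBot.comp
    have h1 : Filter.Tendsto (fun x : ℝ => x ^ 2 / 2) Filter.atTop Filter.atTop :=
      Filter.Tendsto.atTop_div_const (by norm_num) (Filter.tendsto_pow_atTop (by norm_num))
    have h2 := Filter.tendsto_neg_atTop_atBot.comp h1
    apply h2.congr
    intro x
    simp [Function.comp]
    ring
  have hpos : ∀ r ∈ Ioi (0:ℝ), 0 ≤ r * Real.exp (-r ^ 2 / 2) := fun r hr =>
    mul_nonneg (le_of_lt hr) (Real.exp_nonneg _)
  have := integral_Ioi_of_hasDerivAt_of_nonneg hcont hderiv hpos htend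
  rw [this]
  simp

lemma twoD {ρ : ℝ} (h1 : -1 ≤ ρ) (h2 : ρ ≤ 1) :
    ∫ p : ℝ × ℝ, sg p.1 * sg (ρ * p.1 + Real.sqrt (1 - ρ ^ 2) * p.2) * (gφ p.1 * gφ p.2)
      = 2 / π * arcsin ρ := by
  set c := Real.sqrt (1 - ρ ^ 2) with hc
  set A := arccos ρ with hA
  rw [← integral_comp_polarCoord_symm]
  have key : EqOn (fun p : ℝ × ℝ => p.1 •
      (sg (polarCoord.symm p).1 * sg (ρ * (polarCoord.symm p).1 + c * (polarCoord.symm p).2) *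
        (gφ (polarCoord.symm p).1 * gφ (polarCoord.symm p).2)))
      (fun p : ℝ × ℝ => (p.1 * Real.exp (-p.1 ^ 2 / 2)) *
        ((2 * π)⁻¹ * (sg (Real.cos p.2) * sg (Real.cos (p.2 - A)))))
      polarCoord.target := by
    rintro ⟨r, θ⟩ ⟨hr, hθ⟩
    simp only [polarCoord_symm_apply, smul_eq_mul]
    have hr' : (0:ℝ) < r := hr
    have e1 : sg (r * Real.cos θ) = sg (Real.cos θ) := sg_mul_pos _ hr'
    have e2 : ρ * (r * Real.cos θ) + c * (r * Real.sin θ) = r * (Real.cos (θ - A)) := by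
      rw [Real.cos_sub, hA, Real.cos_arccos h1 h2, Real.sin_arccos]
      ring
    have e3 : gφ (r * Real.cos θ) * gφ (r * Real.sin θ) = (2 * π)⁻¹ * Real.exp (-r ^ 2 / 2) := by
      unfold gφ
      have hs : (Real.sqrt (2 * π))⁻¹ * (Real.sqrt (2 * π))⁻¹ = (2 * π)⁻¹ := by
        rw [← mul_inv]
        congr 1
        exact Real.mul_self_sqrt (by positivity)
      have hx : Real.exp (-(r * Real.cos θ) ^ 2 / 2) * Real.exp (-(r * Real.sin θ) ^ 2 / 2)
          = Real.exp (-r ^ 2 / 2) := by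
        rw [← Real.exp_add]
        congr 1
        have := Real.sin_sq_add_cos_sq θ
        nlinarith [this]
      calc (Real.sqrt (2*π))⁻¹ * Real.exp (-(r * Real.cos θ) ^ 2 / 2) *
            ((Real.sqrt (2*π))⁻¹ * Real.exp (-(r * Real.sin θ) ^ 2 / 2))
          = ((Real.sqrt (2*π))⁻¹ * (Real.sqrt (2*π))⁻¹) *
            (Real.exp (-(r * Real.cos θ) ^ 2 / 2) * Real.exp (-(r * Real.sin θ) ^ 2 / 2)) := by ring
        _ = (2 * π)⁻¹ * Real.exp (-r ^ 2 / 2) := by rw [hs, hx]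
    rw [e1, e2, e3, sg_mul_pos _ hr']
    ring
  rw [setIntegral_congr_fun polarCoord.open_target.measurableSet key]
  rw [polarCoord_target, Measure.volume_eq_prod, ← Measure.prod_restrict,
    integral_prod_mul (f := fun r : ℝ => r * Real.exp (-r ^ 2 / 2))
      (g := fun θ => (2 * π)⁻¹ * (sg (Real.cos θ) * sg (Real.cos (θ - A))))]
  rw [radial]
  have : ∫ θ in Ioo (-π) π, (2 * π)⁻¹ * (sg (Real.cos θ) * sg (Real.cos (θ - A)))
      = (2 * π)⁻¹ * (2 * π - 4 * A) := by
    rw [integral_const_mul, ← integral_Ioc_eq_integral_Ioo,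
      ← intervalIntegral.integral_of_le (by linarith [Real.pi_pos] : -π ≤ π),
      theta_integral (Real.arccos_nonneg ρ) (Real.arccos_le_pi ρ)]
  rw [this, one_mul, hA, Real.arccos_eq_pi_div_two_sub_arcsin]
  have hπ : π ≠ 0 := Real.pi_ne_zero
  field_simp
  ring

lemma Kd_nonneg (d : ℕ) (g : EuclideanSpace ℝ (Fin d)) : 0 ≤ Kd d g :=
  Finset.prod_nonneg fun i _ => gφ_nonneg _

lemma integrable_Kd (d : ℕ) : Integrable (Kd d) := by
  have P := (EuclideanSpace.volume_preserving_symm_measurableEquiv_toLp (Fin d)).symm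
    ((MeasurableEquiv.toLp 2 (Fin d → ℝ)).symm)
  have := (P.integrable_comp_emb
    (MeasurableEquiv.measurableEmbedding _) (g := Kd d))
  rw [← this]
  have : (Kd d) ∘ ((MeasurableEquiv.toLp 2 (Fin d → ℝ)).symm).symm
      = fun w : Fin d → ℝ => ∏ i, gφ (w i) := rfl
  rw [this]
  exact prod_gφ_integrable d

lemma integral_Kd (d : ℕ) : ∫ g : EuclideanSpace ℝ (Fin d), Kd d g = 1 := by
  have P := (EuclideanSpace.volume_preserving_symm_measurableEquiv_toLp (Fin d)).symm
    ((MeasurableEquiv.toLp 2 (Fin d → ℝ)).symm)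
  rw [← P.integral_comp' (Kd d)]
  exact integral_prod_gφ d

lemma measurable_inner_right {d : ℕ} (x : EuclideanSpace ℝ (Fin d)) :
    Measurable (fun g : EuclideanSpace ℝ (Fin d) => (inner ℝ x g : ℝ)) :=
  (continuous_const.inner continuous_id).measurable

lemma pair_identity (N : ℕ) (x y : EuclideanSpace ℝ (Fin (N + 2)))
    (hx : ‖x‖ = 1) (hy : ‖y‖ = 1) :
    Real.arcsin (inner ℝ x y : ℝ) = (π / 2) * ∫ g : EuclideanSpace ℝ (Fin (N + 2)),
      sg (inner ℝ x g : ℝ) * sg (inner ℝ y g : ℝ) * Kd (N + 2) g := by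
  have habs : |(inner ℝ x y : ℝ)| ≤ 1 := by
    have := abs_real_inner_le_norm x y
    rwa [hx, hy, one_mul] at this
  rw [spatial N x y hx hy, twoD (neg_le_of_abs_le habs) (le_of_abs_le habs)]
  have hπ : π ≠ 0 := Real.pi_ne_zero
  field_simp

lemma sg_mul_abs (a b : ℝ) : |sg a * sg b| ≤ 1 := by
  rw [abs_mul]
  calc |sg a| * |sg b| ≤ 1 * 1 := mul_le_mul (sg_abs _) (sg_abs _) (abs_nonneg _) zero_le_one
  _ = 1 := by ring

theorem arcsin_grothendieck_real (m n d : ℕ) (M : Fin m → Fin n → ℝ)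
    (hM : ∀ (ε : Fin m → ℝ) (δ : Fin n → ℝ),
      (∀ i, ε i = 1 ∨ ε i = -1) → (∀ j, δ j = 1 ∨ δ j = -1) →
      |∑ i, ∑ j, M i j * ε i * δ j| ≤ 1)
    (x : Fin m → EuclideanSpace ℝ (Fin d)) (y : Fin n → EuclideanSpace ℝ (Fin d))
    (hx : ∀ i, ‖x i‖ = 1) (hy : ∀ j, ‖y j‖ = 1) :
    |∑ i, ∑ j, M i j * Real.arcsin (inner ℝ (x i) (y j))| ≤ π / 2 := by
  have hπ2 : (0:ℝ) < π / 2 := by positivity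
  rcases Nat.eq_zero_or_pos m with hm | hm
  · subst hm
    simp only [Finset.univ_eq_empty, Finset.sum_empty, abs_zero]
    linarith
  rcases Nat.eq_zero_or_pos n with hn | hn
  · subst hn
    simp only [Finset.univ_eq_empty, Finset.sum_empty, mul_zero, Finset.sum_const_zero, abs_zero]
    linarith
  rcases d with _ | (_ | N)
  · -- d = 0 : impossible
    exfalso
    have h1 := hx ⟨0, hm⟩
    have h0 : (x ⟨0, hm⟩ : EuclideanSpace ℝ (Fin 0)) = 0 := Subsingleton.elim _ _
    rw [h0, norm_zero] at h1
    exact zero_ne_one h1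
  · -- d = 1
    set ε : Fin m → ℝ := fun i => x i 0 with hε
    set δ : Fin n → ℝ := fun j => y j 0 with hδ
    have habs1 : ∀ (v : EuclideanSpace ℝ (Fin 1)), ‖v‖ = 1 → v 0 = 1 ∨ v 0 = -1 := by
      intro v hv
      have h1 : |v 0| = 1 := by
        rw [EuclideanSpace.norm_eq] at hv
        rw [Fin.sum_univ_one, Real.norm_eq_abs, sq_abs, Real.sqrt_sq_eq_abs] at hv
        exact hv
      rcases (abs_eq (by norm_num : (0:ℝ) ≤ 1)).mp h1 with h | h
      exacts [Or.inl h, Or.inr h]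
    have hxe : ∀ i, ε i = 1 ∨ ε i = -1 := fun i => habs1 _ (hx i)
    have hyd : ∀ j, δ j = 1 ∨ δ j = -1 := fun j => habs1 _ (hy j)
    have hinner : ∀ i j, (inner ℝ (x i) (y j) : ℝ) = ε i * δ j := by
      intro i j
      rw [PiLp.inner_apply, Fin.sum_univ_one]
      simp [RCLike.inner_apply, starRingEnd_apply, hε, hδ, mul_comm]
    have harc : ∀ i j, Real.arcsin (inner ℝ (x i) (y j) : ℝ) = ε i * δ j * (π / 2) := by
      intro i j
      rw [hinner]
      rcases hxe i with h | h <;> rcases hyd j with h' | h' <;>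
        rw [h, h'] <;> norm_num [Real.arcsin_one, Real.arcsin_neg_one]
    have hsum : ∑ i, ∑ j, M i j * Real.arcsin (inner ℝ (x i) (y j) : ℝ)
        = (π / 2) * ∑ i, ∑ j, M i j * ε i * δ j := by
      rw [Finset.mul_sum]
      apply Finset.sum_congr rfl
      intro i _
      rw [Finset.mul_sum]
      apply Finset.sum_congr rfl
      intro j _
      rw [harc]
      ring
    rw [hsum, abs_mul, abs_of_pos hπ2]
    have := hM ε δ hxe hyd
    nlinarith
  · -- d = N + 2
    have key : ∀ (i : Fin m) (j : Fin n), Real.arcsin (inner ℝ (x i) (y j) : ℝ)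
        = (π / 2) * ∫ g : EuclideanSpace ℝ (Fin (N + 2)),
            sg (inner ℝ (x i) g : ℝ) * sg (inner ℝ (y j) g : ℝ) * Kd (N + 2) g :=
      fun i j => pair_identity N _ _ (hx i) (hy j)
    have hpm : ∀ (i : Fin m) (j : Fin n),
        Measurable fun g : EuclideanSpace ℝ (Fin (N + 2)) =>
          sg (inner ℝ (x i) g : ℝ) * sg (inner ℝ (y j) g : ℝ) := fun i j =>
      (measurable_sg.comp (measurable_inner_right _)).mul
        (measurable_sg.comp (measurable_inner_right _))
    have hint : ∀ (i : Fin m) (j : Fin n),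
        Integrable (fun g : EuclideanSpace ℝ (Fin (N + 2)) =>
          sg (inner ℝ (x i) g : ℝ) * sg (inner ℝ (y j) g : ℝ) * Kd (N + 2) g) := fun i j =>
      integrable_bdd_mul (hpm i j) (fun g => sg_mul_abs _ _) (integrable_Kd _)
    set F : EuclideanSpace ℝ (Fin (N + 2)) → ℝ := fun g =>
      ∑ i, ∑ j, M i j * sg (inner ℝ (x i) g : ℝ) * sg (inner ℝ (y j) g : ℝ) with hF
    have hFb : ∀ g, |F g| ≤ 1 := fun g =>
      hM (fun i => sg (inner ℝ (x i) g : ℝ)) (fun j => sg (inner ℝ (y j) g : ℝ))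
        (fun i => sg_mem _) (fun j => sg_mem _)
    have hFmeas : Measurable F := by
      apply Finset.measurable_sum
      intro i _
      apply Finset.measurable_sum
      intro j _
      exact ((measurable_sg.comp (measurable_inner_right _)).const_mul (M i j)).mul
        (measurable_sg.comp (measurable_inner_right _))
    have hswap : ∑ i, ∑ j, M i j * Real.arcsin (inner ℝ (x i) (y j) : ℝ)
        = (π / 2) * ∫ g, F g * Kd (N + 2) g := by
      have e1 : ∑ i, ∑ j, M i j * Real.arcsin (inner ℝ (x i) (y j) : ℝ)
          = (π / 2) * ∑ i, ∑ j, M i j * ∫ g : EuclideanSpace ℝ (Fin (N + 2)),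
              sg (inner ℝ (x i) g : ℝ) * sg (inner ℝ (y j) g : ℝ) * Kd (N + 2) g := by
        rw [Finset.mul_sum]
        apply Finset.sum_congr rfl
        intro i _
        rw [Finset.mul_sum]
        apply Finset.sum_congr rfl
        intro j _
        rw [key]
        ring
      rw [e1]
      congr 1
      have e2 : ∀ (i : Fin m) (j : Fin n), M i j * (∫ g : EuclideanSpace ℝ (Fin (N + 2)),
          sg (inner ℝ (x i) g : ℝ) * sg (inner ℝ (y j) g : ℝ) * Kd (N + 2) g)
          = ∫ g : EuclideanSpace ℝ (Fin (N + 2)),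
              M i j * (sg (inner ℝ (x i) g : ℝ) * sg (inner ℝ (y j) g : ℝ) * Kd (N + 2) g) := by
        intro i j
        rw [integral_const_mul]
      have e3 : ∀ i : Fin m, ∑ j, M i j * (∫ g : EuclideanSpace ℝ (Fin (N + 2)),
          sg (inner ℝ (x i) g : ℝ) * sg (inner ℝ (y j) g : ℝ) * Kd (N + 2) g)
          = ∫ g : EuclideanSpace ℝ (Fin (N + 2)), ∑ j, M i j *
              (sg (inner ℝ (x i) g : ℝ) * sg (inner ℝ (y j) g : ℝ) * Kd (N + 2) g) := by
        intro i
        calc ∑ j, M i j * (∫ g : EuclideanSpace ℝ (Fin (N + 2)),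
                sg (inner ℝ (x i) g : ℝ) * sg (inner ℝ (y j) g : ℝ) * Kd (N + 2) g)
            = ∑ j, ∫ g : EuclideanSpace ℝ (Fin (N + 2)), M i j *
                (sg (inner ℝ (x i) g : ℝ) * sg (inner ℝ (y j) g : ℝ) * Kd (N + 2) g) :=
              Finset.sum_congr rfl fun j _ => e2 i j
          _ = ∫ g : EuclideanSpace ℝ (Fin (N + 2)), ∑ j, M i j *
                (sg (inner ℝ (x i) g : ℝ) * sg (inner ℝ (y j) g : ℝ) * Kd (N + 2) g) :=
              (integral_finset_sum _ (fun j _ => (hint i j).const_mul _)).symm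
      calc ∑ i, ∑ j, M i j * (∫ g : EuclideanSpace ℝ (Fin (N + 2)),
              sg (inner ℝ (x i) g : ℝ) * sg (inner ℝ (y j) g : ℝ) * Kd (N + 2) g)
          = ∑ i, ∫ g : EuclideanSpace ℝ (Fin (N + 2)), ∑ j, M i j *
              (sg (inner ℝ (x i) g : ℝ) * sg (inner ℝ (y j) g : ℝ) * Kd (N + 2) g) := by
            exact Finset.sum_congr rfl fun i _ => e3 i
        _ = ∫ g : EuclideanSpace ℝ (Fin (N + 2)), ∑ i, ∑ j, M i j *
              (sg (inner ℝ (x i) g : ℝ) * sg (inner ℝ (y j) g : ℝ) * Kd (N + 2) g) := by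
            rw [← integral_finset_sum]
            intro i _
            exact integrable_finset_sum _ (fun j _ => (hint i j).const_mul _)
        _ = ∫ g, F g * Kd (N + 2) g := by
            congr 1
            funext g
            rw [hF]
            simp only
            rw [Finset.sum_mul]
            apply Finset.sum_congr rfl
            intro i _
            rw [Finset.sum_mul]
            apply Finset.sum_congr rfl
            intro j _
            ring
    rw [hswap, abs_mul, abs_of_pos hπ2]
    have hIF : Integrable (fun g => F g * Kd (N + 2) g) :=
      integrable_bdd_mul hFmeas hFb (integrable_Kd _)
    have h1 : |∫ g, F g * Kd (N + 2) g| ≤ ∫ g, |F g| * |Kd (N + 2) g| := by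
      simpa [Real.norm_eq_abs] using
        norm_integral_le_integral_norm (μ := volume) (fun g : EuclideanSpace ℝ (Fin (N + 2)) =>
          F g * Kd (N + 2) g)
    have h2 : ∫ g, |F g| * |Kd (N + 2) g| ≤ ∫ g : EuclideanSpace ℝ (Fin (N + 2)), Kd (N + 2) g := by
      have habseq : (fun g : EuclideanSpace ℝ (Fin (N + 2)) => |F g| * |Kd (N + 2) g|)
          = fun g => |F g * Kd (N + 2) g| := by
        funext g
        rw [abs_mul]
      rw [habseq]
      apply integral_mono hIF.abs (integrable_Kd _)
      intro g
      show |F g * Kd (N + 2) g| ≤ Kd (N + 2) g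
      rw [abs_mul, abs_of_nonneg (Kd_nonneg _ _)]
      calc |F g| * Kd (N + 2) g ≤ 1 * Kd (N + 2) g :=
        mul_le_mul_of_nonneg_right (hFb g) (Kd_nonneg _ _)
      _ = Kd (N + 2) g := one_mul _
    rw [integral_Kd] at h2
    calc π / 2 * |∫ g, F g * Kd (N + 2) g| ≤ π / 2 * 1 :=
      mul_le_mul_of_nonneg_left (h1.trans h2) (le_of_lt hπ2)
    _ = π / 2 := mul_one _
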